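/- Let N ∈ ℕ, let K be the (N+1)×(N+1) matrix with K_{i,j} = K_j(i) for i, j ∈ {0,…,N}, and let M be the diagonal matrix with M_{j,j} = C(N,j). Then K is invertible with K^{−1} = 2^{−N} M K M; equivalently, Σ_{i=0}^{N} C(N,i) K_n(i) K_m(i) = δ_{n,m} · 2^{N} · C(N,n)^{−1} for all n, m ∈ {0,…,N}. -/

import Mathlib

open Matrix Set Polynomial

/-- Krawtchouk polynomial `K_n(x)` with parameter `p = 1/2` and `N` trials. -/
noncomputable def kraw (N n : ℕ) (x : ℂ) : ℂ :=
  ∑ s ∈ Finset.range (n + 1),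
    ((ascPochhammer ℂ s).eval (-(n : ℂ)) * (ascPochhammer ℂ s).eval (-x)
        / ((ascPochhammer ℂ s).eval (-(N : ℂ)) * (Nat.factorial s : ℂ))) * 2 ^ s

/-- The Krawtchouk matrix `K_{i,j} = K_j(i)`. -/
noncomputable def Kmat (N : ℕ) : Matrix (Fin (N + 1)) (Fin (N + 1)) ℂ :=
  Matrix.of fun i j => kraw N (j : ℕ) (((i : ℕ) : ℂ))

/-- The diagonal binomial matrix `M_{j,j} = C(N,j)`. -/
noncomputable def Mmat (N : ℕ) : Matrix (Fin (N + 1)) (Fin (N + 1)) ℂ :=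
  Matrix.diagonal fun j => (N.choose (j : ℕ) : ℂ)

/-! For `i ≤ N`, `C(N,n) K_n(i)` is the coefficient of `X^n` in `(1 - X)^i (1 + X)^(N - i)`.
Summing the products of two such generating functions against the binomial weights gives, by the
binomial theorem, `((1 - X)(1 - Y) + (1 + X)(1 + Y))^N = 2^N (1 + XY)^N`, whose coefficients are
the orthogonality relations. Since moreover `K_n(i) = K_i(n)`, these relations say
`K M K = 2^N M⁻¹`, which is the inversion formula. -/

lemma kraw_natCast_eq_sum {N n : ℕ} (hn : n ≤ N) (i : ℕ) :
    kraw N n i = ∑ s ∈ Finset.range (N + 1),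
      (-2 : ℂ) ^ s * n.choose s * i.choose s / N.choose s := by
  have hterm : ∀ s ∈ Finset.range (n + 1),
      (ascPochhammer ℂ s).eval (-(n : ℂ)) * (ascPochhammer ℂ s).eval (-(i : ℂ))
          / ((ascPochhammer ℂ s).eval (-(N : ℂ)) * (s.factorial : ℂ)) * 2 ^ s
        = (-2 : ℂ) ^ s * n.choose s * i.choose s / N.choose s := by
    intro s hs
    have hsN : s ≤ N := (Nat.lt_succ_iff.mp (Finset.mem_range.mp hs)).trans hn
    have hNs : (N.choose s : ℂ) ≠ 0 := Nat.cast_ne_zero.mpr (Nat.choose_pos hsN).ne'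
    have hs! : (s.factorial : ℂ) ≠ 0 := Nat.cast_ne_zero.mpr s.factorial_ne_zero
    simp only [ascPochhammer_eval_neg_eq_descPochhammer, descPochhammer_eval_eq_descFactorial,
      Nat.descFactorial_eq_factorial_mul_choose, Nat.cast_mul, neg_pow (2 : ℂ)]
    field_simp
  rw [kraw, Finset.sum_congr rfl hterm]
  refine Finset.sum_subset (Finset.range_subset_range.mpr (by omega)) fun s _ hs => ?_
  rw [Finset.mem_range, not_lt] at hs
  simp [Nat.choose_eq_zero_of_lt hs]

lemma kraw_natCast_comm {N n i : ℕ} (hn : n ≤ N) (hi : i ≤ N) :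
    kraw N n i = kraw N i n := by
  rw [kraw_natCast_eq_sum hn, kraw_natCast_eq_sum hi]
  exact Finset.sum_congr rfl fun s _ => by ring

noncomputable def krawGen (N i : ℕ) : ℂ[X] := (1 - X) ^ i * (1 + X) ^ (N - i)

lemma coeff_krawGen {N i : ℕ} (hi : i ≤ N) (n : ℕ) :
    (krawGen N i).coeff n = ∑ s ∈ Finset.range (N + 1),
      (-2 : ℂ) ^ s * i.choose s * (if s ≤ n then ((N - s).choose (n - s) : ℂ) else 0) := by
  have hterm : ∀ s ∈ Finset.range (i + 1),
      ((-2 * X) ^ s * (1 + X) ^ (i - s) * (i.choose s : ℂ[X]) * (1 + X) ^ (N - i)).coeff n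
        = (-2 : ℂ) ^ s * i.choose s * (if s ≤ n then ((N - s).choose (n - s) : ℂ) else 0) := by
    intro s hs
    have hsi : s ≤ i := Nat.lt_succ_iff.mp (Finset.mem_range.mp hs)
    have hmonomial : (-2 * X) ^ s * (1 + X) ^ (i - s) * (i.choose s : ℂ[X]) * (1 + X) ^ (N - i)
        = C ((-2 : ℂ) ^ s * i.choose s) * ((1 + X) ^ (N - s) * X ^ s) := by
      rw [show N - s = i - s + (N - i) by omega, pow_add, mul_pow]
      simp only [map_mul, map_pow, map_neg, map_ofNat, C_eq_natCast]
      ring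
    rw [hmonomial, coeff_C_mul, coeff_mul_X_pow', coeff_one_add_X_pow]
  rw [krawGen, show (1 - X : ℂ[X]) = -2 * X + (1 + X) by ring, add_pow, Finset.sum_mul,
    finsetSum_coeff, Finset.sum_congr rfl hterm]
  refine Finset.sum_subset (Finset.range_subset_range.mpr (by omega)) fun s _ hs => ?_
  rw [Finset.mem_range, not_lt] at hs
  simp [Nat.choose_eq_zero_of_lt hs]

lemma choose_mul_kraw_natCast {N n i : ℕ} (hn : n ≤ N) (hi : i ≤ N) :
    N.choose n * kraw N n i = (krawGen N i).coeff n := by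
  rw [kraw_natCast_eq_sum hn, coeff_krawGen hi, Finset.mul_sum]
  refine Finset.sum_congr rfl fun s hs => ?_
  have hNs : (N.choose s : ℂ) ≠ 0 :=
    Nat.cast_ne_zero.mpr (Nat.choose_pos (Nat.lt_succ_iff.mp (Finset.mem_range.mp hs))).ne'
  split_ifs with hsn
  · have hchoose : (N.choose n * n.choose s : ℂ) = N.choose s * (N - s).choose (n - s) := by
      exact_mod_cast Nat.choose_mul hsn
    field_simp
    linear_combination (i.choose s : ℂ) * hchoose
  · simp [Nat.choose_eq_zero_of_lt (not_le.mp hsn)]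

lemma coeff_coeff_map_C_mul_C {R : Type*} [Semiring R] (p q : R[X]) (n m : ℕ) :
    ((p.map C * C q).coeff n).coeff m = p.coeff n * q.coeff m := by
  rw [coeff_mul_C, coeff_map, coeff_C_mul]

/-- In `ℂ[X][X]`, `p.map C * C q` is `p(X) q(Y)`, with `Y` the inner variable. -/
lemma sum_choose_smul_krawGen_mul_krawGen (N : ℕ) :
    ∑ i ∈ Finset.range (N + 1), N.choose i • ((krawGen N i).map C * C (krawGen N i))
      = 2 ^ N • ∑ k ∈ Finset.range (N + 1), N.choose k • ((X ^ k : ℂ[X]).map C * C (X ^ k)) := by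
  have hlhs : ∀ i ∈ Finset.range (N + 1),
      N.choose i • ((krawGen N i).map C * C (krawGen N i))
        = ((1 - X : ℂ[X][X]) * C (1 - X)) ^ i * ((1 + X) * C (1 + X)) ^ (N - i)
            * (N.choose i : ℂ[X][X]) := by
    intro i _
    simp only [krawGen, nsmul_eq_mul, Polynomial.map_mul, Polynomial.map_pow, Polynomial.map_sub,
      Polynomial.map_add, Polynomial.map_one, Polynomial.map_X, map_mul, map_pow, mul_pow]
    ring
  have hrhs : ∀ k ∈ Finset.range (N + 1),
      N.choose k • ((X ^ k : ℂ[X]).map C * C (X ^ k))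
        = ((X : ℂ[X][X]) * C X) ^ k * 1 ^ (N - k) * (N.choose k : ℂ[X][X]) := by
    intro k _
    simp only [nsmul_eq_mul, Polynomial.map_pow, Polynomial.map_X, map_pow, one_pow, mul_one,
      mul_pow]
    ring
  rw [Finset.sum_congr rfl hlhs, Finset.sum_congr rfl hrhs, ← add_pow, ← add_pow, nsmul_eq_mul,
    Nat.cast_pow, Nat.cast_ofNat, ← mul_pow]
  congr 1
  simp only [map_sub, map_add, map_one]
  ring

lemma sum_choose_mul_coeff_krawGen_mul_coeff_krawGen (N n m : ℕ) :
    ∑ i ∈ Finset.range (N + 1), N.choose i * (krawGen N i).coeff n * (krawGen N i).coeff m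
      = if n = m then (2 : ℂ) ^ N * N.choose n else 0 := by
  have h := congrArg (fun P : ℂ[X][X] => (P.coeff n).coeff m)
    (sum_choose_smul_krawGen_mul_krawGen N)
  simp only [finsetSum_coeff, coeff_smul, coeff_coeff_map_C_mul_C, coeff_X_pow] at h
  simp only [nsmul_eq_mul, ← mul_assoc] at h
  rw [h]
  split_ifs with hnm
  · subst hnm
    simp [Nat.choose_eq_zero_iff]
  · simp [hnm]

lemma sum_choose_mul_kraw_mul_kraw {N n m : ℕ} (hn : n ≤ N) (hm : m ≤ N) :
    ∑ i ∈ Finset.range (N + 1), N.choose i * kraw N n i * kraw N m i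
      = if n = m then (2 : ℂ) ^ N * (N.choose n : ℂ)⁻¹ else 0 := by
  have hNn : (N.choose n : ℂ) ≠ 0 := Nat.cast_ne_zero.mpr (Nat.choose_pos hn).ne'
  have hNm : (N.choose m : ℂ) ≠ 0 := Nat.cast_ne_zero.mpr (Nat.choose_pos hm).ne'
  have hscaled : N.choose n * N.choose m *
      ∑ i ∈ Finset.range (N + 1), N.choose i * kraw N n i * kraw N m i
        = if n = m then (2 : ℂ) ^ N * N.choose n else 0 := by
    rw [← sum_choose_mul_coeff_krawGen_mul_coeff_krawGen, Finset.mul_sum]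
    refine Finset.sum_congr rfl fun i hi => ?_
    have hiN : i ≤ N := Nat.lt_succ_iff.mp (Finset.mem_range.mp hi)
    rw [← choose_mul_kraw_natCast hn hiN, ← choose_mul_kraw_natCast hm hiN]
    ring
  split_ifs at hscaled ⊢ with hnm
  · subst hnm
    rw [eq_mul_inv_iff_mul_eq₀ hNn]
    exact mul_right_cancel₀ hNn (by linear_combination hscaled)
  · simpa [hNn, hNm] using hscaled

lemma Kmat_mul_Mmat_mul_Kmat (N : ℕ) :
    Kmat N * Mmat N * Kmat N
      = (2 : ℂ) ^ N • diagonal fun j : Fin (N + 1) => (N.choose j : ℂ)⁻¹ := by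
  ext a b
  have hsymm : ∀ k : Fin (N + 1), kraw N k a = kraw N a k := fun k =>
    kraw_natCast_comm (k.is_le) (a.is_le)
  rw [mul_apply]
  simp only [Kmat, Mmat, mul_diagonal, of_apply, hsymm]
  rw [Fin.sum_univ_eq_sum_range (fun i => kraw N a i * N.choose i * kraw N b i)]
  simp only [mul_comm (kraw N a _) (N.choose _ : ℂ)]
  rw [sum_choose_mul_kraw_mul_kraw (a.is_le) (b.is_le),
    Matrix.smul_apply, diagonal_apply]
  simp only [Fin.val_inj, smul_eq_mul, mul_ite, mul_zero]

lemma Kmat_mul_Mmat_mul_Kmat_mul_Mmat (N : ℕ) :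
    Kmat N * Mmat N * Kmat N * Mmat N = (2 : ℂ) ^ N • 1 := by
  rw [Kmat_mul_Mmat_mul_Kmat, Mmat, smul_mul, diagonal_mul_diagonal, ← diagonal_one]
  congr 2 with j
  exact inv_mul_cancel₀ (Nat.cast_ne_zero.mpr (Nat.choose_pos j.is_le).ne')

/-- `K` is invertible with `K⁻¹ = 2^{−N} M K M`; equivalently the
orthogonality relations `Σ_i C(N,i) K_n(i) K_m(i) = δ_{n,m} 2^N C(N,n)⁻¹` hold. -/
theorem stmt10 (N : ℕ) :
    Kmat N * (((2 : ℂ) ^ N)⁻¹ • (Mmat N * Kmat N * Mmat N)) = 1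
    ∧ (((2 : ℂ) ^ N)⁻¹ • (Mmat N * Kmat N * Mmat N)) * Kmat N = 1
    ∧ ∀ n m : ℕ, n ≤ N → m ≤ N →
        (∑ i ∈ Finset.range (N + 1),
          (N.choose i : ℂ) * kraw N n (i : ℂ) * kraw N m (i : ℂ))
        = if n = m then (2 : ℂ) ^ N * ((N.choose n : ℂ))⁻¹ else 0 := by
  have hinv : Kmat N * (((2 : ℂ) ^ N)⁻¹ • (Mmat N * Kmat N * Mmat N)) = 1 := by
    rw [Matrix.mul_smul, ← Matrix.mul_assoc, ← Matrix.mul_assoc, Kmat_mul_Mmat_mul_Kmat_mul_Mmat,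
      smul_smul, inv_mul_cancel₀ (pow_ne_zero N two_ne_zero), one_smul]
  exact ⟨hinv, mul_eq_one_comm.mp hinv, fun n m hn hm => sum_choose_mul_kraw_mul_kraw hn hm⟩
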